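/- arXiv:math/0203138 — 4 statements merged into one kernel-verified Lean document; each statement's English description precedes it below -/
import Mathlib

section
/- Let 2 ≤ k ≤ n and let Λ = (λ_1,…,λ_n) ∈ ℝ^n. If Λ ∈ Γ_k^+, then for every index 1 ≤ i ≤ n the vector (Λ|i) ∈ ℝ^{n−1} obtained by deleting the i-th coordinate lies in the Gårding cone Γ_{k−1}^+ of ℝ^{n−1}; likewise, if Λ ∈ Γ̄_k^+ then (Λ|i) ∈ Γ̄_{k−1}^+. -/
/-!
On `Γ_k^+` all of `σ_0, …, σ_k` are positive: the set where they are is open, and at a point of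
`Γ_k^+` in its closure they are nonnegative with `σ_k > 0`, which already forces positivity.
Since `σ_{k+1}(Λ) = σ_{k+1}(Λ|i) + λ_i σ_k(Λ|i)`, the function `Λ ↦ σ_k(Λ|i)` has no zero on the
connected set `Γ_{k+1}^+`, hence is positive there. So the connected image of `Γ_{k+1}^+` under
`Λ ↦ (Λ|i)` lies in `{σ_k > 0}` and contains `(1, …, 1)`, i.e. it lies in `Γ_k^+`; the statement
for closures follows by continuity.
-/

/-- The `k`-th elementary symmetric polynomial of `x : Fin n → ℝ`. -/
noncomputable def sigmaElem (n k : ℕ) (x : Fin n → ℝ) : ℝ :=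
  ∑ s ∈ Finset.univ.powersetCard k, ∏ i ∈ s, x i

/-- The Gårding cone `Γ_k^+ ⊆ ℝ^n`: the connected component of
`{σ_k > 0}` containing `(1, …, 1)`. -/
def GammaPlus (n k : ℕ) : Set (Fin n → ℝ) :=
  connectedComponentIn {x | 0 < sigmaElem n k x} (fun _ => 1)

/-- `(Λ|i)`: remove the `i`-th coordinate of a vector in `ℝ^{n+1}`. -/
def removeIdx {n : ℕ} (i : Fin (n + 1)) (x : Fin (n + 1) → ℝ) : Fin n → ℝ :=
  fun j => x (i.succAbove j)

open Polynomial Set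

namespace Multiset

theorem esymm_cons (a : ℝ) (s : Multiset ℝ) (k : ℕ) :
    (a ::ₘ s).esymm (k + 1) = s.esymm (k + 1) + a * s.esymm k := by
  simp [esymm, powersetCard_cons, map_map, sum_map_mul_left]

theorem esymm_pos {s : Multiset ℝ} (hs : ∀ a ∈ s, 0 < a) {j : ℕ} (hj : j ≤ card s) :
    0 < s.esymm j := by
  obtain ⟨t, ht⟩ : ∃ t, t ∈ powersetCard j s :=
    card_pos_iff_exists_mem.1 (by rw [card_powersetCard]; exact Nat.choose_pos hj)
  have hprod : ∀ u ∈ powersetCard j s, 0 < u.prod := fun u hu =>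
    prod_pos fun a ha => hs a (mem_of_le (mem_powersetCard.1 hu).1 ha)
  calc 0 < t.prod := hprod t ht
    _ ≤ s.esymm j := single_le_sum (forall_mem_map_iff.2 fun u hu => (hprod u hu).le) _
        (mem_map_of_mem _ ht)

end Multiset

namespace Polynomial

theorem card_roots_derivative_of_card_roots {p : ℝ[X]}
    (hp : Multiset.card p.roots = p.natDegree) :
    Multiset.card (derivative p).roots = (derivative p).natDegree := by
  have := card_roots_le_derivative p
  have := natDegree_derivative_le p
  have := card_roots' (derivative p)
  omega

theorem card_roots_iterate_derivative_of_card_roots {p : ℝ[X]}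
    (hp : Multiset.card p.roots = p.natDegree) (m : ℕ) :
    Multiset.card (derivative^[m] p).roots = (derivative^[m] p).natDegree := by
  induction m with
  | zero => exact hp
  | succ m ih =>
    rw [Function.iterate_succ_apply']
    exact card_roots_derivative_of_card_roots ih

theorem coeff_pos_of_card_roots {p : ℝ[X]} (hroots : Multiset.card p.roots = p.natDegree)
    (hnonneg : ∀ i, 0 ≤ p.coeff i) (h0 : 0 < p.coeff 0) {i : ℕ} (hi : i ≤ p.natDegree) :
    0 < p.coeff i := by
  have hneg : ∀ r ∈ p.roots, r < 0 := by
    intro r hr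
    by_contra! hr0
    have : p.coeff 0 ≤ p.eval r := by
      rw [eval_eq_sum_range]
      simpa using Finset.single_le_sum (f := fun i => p.coeff i * r ^ i)
        (fun i _ => mul_nonneg (hnonneg i) (pow_nonneg hr0 i)) (Finset.mem_range.2 (Nat.succ_pos _))
    rw [(mem_roots'.1 hr).2] at this
    linarith
  have hlc : 0 < p.leadingCoeff :=
    (hnonneg _).lt_of_ne' (leadingCoeff_ne_zero.2 fun hp => by simp [hp] at h0)
  rw [coeff_eq_esymm_roots_of_card hroots hi, mul_assoc, ← Multiset.esymm_neg]
  refine mul_pos hlc (Multiset.esymm_pos ?_ (by simp [hroots]))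
  exact Multiset.forall_mem_map_iff.2 fun r hr => neg_pos.2 (hneg r hr)

end Polynomial

/-- The `(card s - k)`-th derivative of `∏ (X + C a)` is real-rooted (Rolle) of degree `k`, and its
coefficients are positive multiples of `esymm s k, …, esymm s 0`. -/
theorem Multiset.esymm_pos_of_esymm_nonneg {s : Multiset ℝ} {k : ℕ} (hk : k ≤ card s)
    (hnonneg : ∀ j ≤ k, 0 ≤ s.esymm j) (hpos : 0 < s.esymm k) {j : ℕ} (hj : j ≤ k) :
    0 < s.esymm j := by
  obtain ⟨d, hd⟩ : ∃ d, Multiset.card s = k + d := ⟨_, (Nat.add_sub_cancel' hk).symm⟩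
  set P : ℝ[X] := (s.map fun a => X + C a).prod
  have hP : P = ((s.map Neg.neg).map fun a => X - C a).prod := by
    simp [P, Multiset.map_map, sub_eq_add_neg]
  have hPdeg : P.natDegree = Multiset.card s := by
    rw [hP, natDegree_multiset_prod_X_sub_C_eq_card, Multiset.card_map]
  have hProots : Multiset.card P.roots = P.natDegree := by
    rw [hPdeg, hP, roots_multiset_prod_X_sub_C, Multiset.card_map]
  obtain ⟨Q, hQ⟩ : ∃ Q, Q = derivative^[d] P := ⟨_, rfl⟩
  have hfac : ∀ i, (0 : ℝ) < (i + d).descFactorial d := fun i => by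
    exact_mod_cast Nat.descFactorial_pos.2 (Nat.le_add_left d i)
  have hcoeff : ∀ i ≤ k, Q.coeff i = (i + d).descFactorial d * s.esymm (k - i) := by
    intro i hi
    rw [hQ, coeff_iterate_derivative, Multiset.prod_X_add_C_coeff s (by omega), nsmul_eq_mul]
    rw [show Multiset.card s - (i + d) = k - i by omega]
  have hQdeg : Q.natDegree = k := by
    refine natDegree_eq_of_le_of_coeff_ne_zero ?_ ?_
    · have := natDegree_iterate_derivative P d
      rw [hQ]
      omega
    · rw [hcoeff k le_rfl, Nat.sub_self]
      simp [Multiset.esymm, (hfac k).ne']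
  have hQnonneg : ∀ i, 0 ≤ Q.coeff i := by
    intro i
    rcases le_or_gt i k with hi | hi
    · rw [hcoeff i hi]
      exact mul_nonneg (hfac i).le (hnonneg _ (Nat.sub_le k i))
    · rw [coeff_eq_zero_of_natDegree_lt (hQdeg ▸ hi)]
  have hQ0 : 0 < Q.coeff 0 := by
    rw [hcoeff 0 k.zero_le, Nat.sub_zero]
    exact mul_pos (hfac 0) hpos
  have hQroots := hQ ▸ card_roots_iterate_derivative_of_card_roots hProots d
  have := coeff_pos_of_card_roots hQroots hQnonneg hQ0 (i := k - j) (by omega)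
  rw [hcoeff _ (Nat.sub_le k j), Nat.sub_sub_self hj] at this
  exact pos_of_mul_pos_right this (hfac _).le

theorem sigmaElem_eq_esymm (n k : ℕ) (x : Fin n → ℝ) :
    sigmaElem n k x = (Finset.univ.val.map x).esymm k :=
  (Finset.esymm_map_val x _ k).symm

theorem sigmaElem_const_one_pos {n k : ℕ} (h : k ≤ n) : 0 < sigmaElem n k (fun _ => 1) := by
  simpa [sigmaElem] using Nat.choose_pos h

theorem sigmaElem_zero (n : ℕ) (x : Fin n → ℝ) : sigmaElem n 0 x = 1 := by
  simp [sigmaElem]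

theorem sigmaElem_succ_eq_removeIdx {n : ℕ} (i : Fin (n + 1)) (x : Fin (n + 1) → ℝ) (k : ℕ) :
    sigmaElem (n + 1) (k + 1) x =
      sigmaElem n (k + 1) (removeIdx i x) + x i * sigmaElem n k (removeIdx i x) := by
  simp only [sigmaElem_eq_esymm, Fin.univ_succAbove n i, Finset.cons_val, Multiset.map_cons,
    Multiset.esymm_cons, Finset.map_val, Multiset.map_map]
  rfl

theorem removeIdx_update_self {n : ℕ} (i : Fin (n + 1)) (x : Fin (n + 1) → ℝ) (t : ℝ) :
    removeIdx i (Function.update x i t) = removeIdx i x :=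
  funext fun j => Function.update_of_ne (Fin.succAbove_ne i j) ..

theorem removeIdx_const {n : ℕ} (i : Fin (n + 1)) (c : ℝ) : removeIdx i (fun _ => c) = fun _ => c :=
  rfl

theorem continuous_sigmaElem (n k : ℕ) : Continuous (sigmaElem n k) :=
  continuous_finsetSum _ fun _ _ => continuous_finsetProd _ fun i _ => continuous_apply i

theorem continuous_removeIdx {n : ℕ} (i : Fin (n + 1)) :
    Continuous (removeIdx i : (Fin (n + 1) → ℝ) → Fin n → ℝ) :=
  continuous_pi fun _ => continuous_apply _

section GammaPlus

variable {N k : ℕ}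

theorem gammaPlus_subset : GammaPlus N k ⊆ {x | 0 < sigmaElem N k x} :=
  connectedComponentIn_subset _ _

theorem isPreconnected_gammaPlus : IsPreconnected (GammaPlus N k) :=
  isPreconnected_connectedComponentIn

theorem const_one_mem_gammaPlus (h : k ≤ N) : (fun _ => 1) ∈ GammaPlus N k :=
  mem_connectedComponentIn (sigmaElem_const_one_pos h)

theorem le_of_mem_gammaPlus {x : Fin N → ℝ} (hx : x ∈ GammaPlus N k) : k ≤ N := by
  by_contra! h
  have := gammaPlus_subset hx
  simp [sigmaElem, Finset.powersetCard_eq_empty.2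
    (by simpa using h : (Finset.univ : Finset (Fin N)).card < k)] at this

theorem IsPreconnected.subset_gammaPlus {S : Set (Fin N → ℝ)} (hS : IsPreconnected S)
    (hpos : S ⊆ {x | 0 < sigmaElem N k x}) {x : Fin N → ℝ} (hxS : x ∈ S)
    (hx : x ∈ GammaPlus N k) : S ⊆ GammaPlus N k := by
  rw [GammaPlus, connectedComponentIn_eq hx]
  exact hS.subset_connectedComponentIn hxS hpos

theorem sigmaElem_pos_of_mem_gammaPlus {x : Fin N → ℝ} (hx : x ∈ GammaPlus N k) {j : ℕ}
    (hj : j ≤ k) : 0 < sigmaElem N j x := by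
  have hkN := le_of_mem_gammaPlus hx
  set U : Set (Fin N → ℝ) := ⋂ j ∈ Finset.range (k + 1), {x | 0 < sigmaElem N j x}
  have hU : IsOpen U :=
    isOpen_biInter_finset fun j _ => isOpen_lt continuous_const (continuous_sigmaElem N j)
  have hmemU {y : Fin N → ℝ} : y ∈ U ↔ ∀ j ≤ k, 0 < sigmaElem N j y := by
    simp [U]
  have hone : (fun _ => 1) ∈ U := hmemU.2 fun j hj => sigmaElem_const_one_pos (hj.trans hkN)
  have hboundary : closure U ∩ GammaPlus N k ⊆ U := by
    rintro y ⟨hyU, hyΓ⟩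
    have hnonneg : ∀ j ≤ k, 0 ≤ sigmaElem N j y := fun j hj =>
      closure_lt_subset_le continuous_const (continuous_sigmaElem N j)
        (closure_mono (fun z hz => hmemU.1 hz j hj) hyU)
    refine hmemU.2 fun j hj => ?_
    simp only [sigmaElem_eq_esymm] at hnonneg ⊢
    exact Multiset.esymm_pos_of_esymm_nonneg (by simpa using hkN) hnonneg
      (by simpa [sigmaElem_eq_esymm] using gammaPlus_subset hyΓ) hj
  exact hmemU.1 (isPreconnected_gammaPlus.subset_of_closure_inter_subset hU
    ⟨_, const_one_mem_gammaPlus hkN, hone⟩ hboundary hx) j hj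

end GammaPlus

section RemoveIdx

variable {n k : ℕ} {μ : Fin (n + 1) → ℝ}

/-- If `σ_k(μ|i)` vanished, `σ_{k+1}` would be constant on the line through `μ` in direction `e_i`,
so the whole line would lie in `Γ_{k+1}^+`; but `σ_1` takes every real value on it. -/
theorem sigmaElem_removeIdx_ne_zero (hμ : μ ∈ GammaPlus (n + 1) (k + 1)) (i : Fin (n + 1)) :
    sigmaElem n k (removeIdx i μ) ≠ 0 := by
  intro h0
  have hline {j : ℕ} (t : ℝ) : sigmaElem (n + 1) (j + 1) (Function.update μ i t) =
      sigmaElem n (j + 1) (removeIdx i μ) + t * sigmaElem n j (removeIdx i μ) := by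
    rw [sigmaElem_succ_eq_removeIdx i, removeIdx_update_self, Function.update_self]
  have hpos : range (Function.update μ i) ⊆ {x | 0 < sigmaElem (n + 1) (k + 1) x} := by
    rintro _ ⟨t, rfl⟩
    have : 0 < sigmaElem (n + 1) (k + 1) μ := gammaPlus_subset hμ
    rw [sigmaElem_succ_eq_removeIdx i, h0, mul_zero] at this
    change 0 < sigmaElem (n + 1) (k + 1) (Function.update μ i t)
    rwa [hline, h0, mul_zero]
  have hsub : range (Function.update μ i) ⊆ GammaPlus (n + 1) (k + 1) :=
    (isPreconnected_range (continuous_const.update i continuous_id)).subset_gammaPlus hpos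
      ⟨μ i, Function.update_eq_self i μ⟩ hμ
  have := sigmaElem_pos_of_mem_gammaPlus (hsub ⟨-sigmaElem n 1 (removeIdx i μ), rfl⟩)
    (j := 1) (by omega)
  rw [hline, sigmaElem_zero] at this
  linarith

theorem sigmaElem_removeIdx_pos (hμ : μ ∈ GammaPlus (n + 1) (k + 1)) (i : Fin (n + 1)) :
    0 < sigmaElem n k (removeIdx i μ) := by
  have hkn : k ≤ n := by have := le_of_mem_gammaPlus hμ; omega
  have hf : Continuous fun ν => sigmaElem n k (removeIdx i ν) :=
    (continuous_sigmaElem n k).comp (continuous_removeIdx i)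
  have hone : 0 < sigmaElem n k (removeIdx i fun _ => 1) :=
    removeIdx_const i 1 ▸ sigmaElem_const_one_pos hkn
  by_contra! hle
  obtain ⟨ν, hν, hν0⟩ := isPreconnected_gammaPlus.intermediate_value hμ
    (const_one_mem_gammaPlus (by omega)) hf.continuousOn ⟨hle, hone.le⟩
  exact sigmaElem_removeIdx_ne_zero hν i hν0

theorem mapsTo_removeIdx_gammaPlus (i : Fin (n + 1)) :
    MapsTo (removeIdx i) (GammaPlus (n + 1) (k + 1)) (GammaPlus n k) := by
  intro μ hμ
  have hkn : k ≤ n := by have := le_of_mem_gammaPlus hμ; omega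
  refine (isPreconnected_gammaPlus.image _ (continuous_removeIdx i).continuousOn
    |>.subset_gammaPlus ?_ ⟨_, const_one_mem_gammaPlus (by omega), rfl⟩
    (const_one_mem_gammaPlus hkn)) (mem_image_of_mem _ hμ)
  rintro _ ⟨ν, hν, rfl⟩
  exact sigmaElem_removeIdx_pos hν i

end RemoveIdx

theorem gammaPlus_removeIdx_general (n k : ℕ) (hk : 2 ≤ k) (Λ : Fin (n + 1) → ℝ) :
    (Λ ∈ GammaPlus (n + 1) k → ∀ i, removeIdx i Λ ∈ GammaPlus n (k - 1)) ∧
    (Λ ∈ closure (GammaPlus (n + 1) k) →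
      ∀ i, removeIdx i Λ ∈ closure (GammaPlus n (k - 1))) := by
  obtain ⟨k, rfl⟩ : ∃ m, k = m + 1 := ⟨k - 1, by omega⟩
  rw [Nat.add_sub_cancel]
  exact ⟨fun hΛ i => mapsTo_removeIdx_gammaPlus i hΛ,
    fun hΛ i => map_mem_closure (continuous_removeIdx i) hΛ (mapsTo_removeIdx_gammaPlus i)⟩

/-- if `Λ ∈ Γ_k^+` (resp. `Γ̄_k^+`) in `ℝ^{n+1}` with `2 ≤ k`,
then each `(Λ|i) ∈ Γ_{k-1}^+` (resp. `Γ̄_{k-1}^+`) in `ℝ^n`. -/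
theorem gammaPlus_removeIdx (n k : ℕ) (hk : 2 ≤ k) (hkn : k ≤ n + 1)
    (Λ : Fin (n + 1) → ℝ) :
    (Λ ∈ GammaPlus (n + 1) k → ∀ i, removeIdx i Λ ∈ GammaPlus n (k - 1)) ∧
    (Λ ∈ closure (GammaPlus (n + 1) k) →
      ∀ i, removeIdx i Λ ∈ closure (GammaPlus n (k - 1))) :=
  gammaPlus_removeIdx_general n k hk Λ
end

section
/- Let n ≥ 2. If Λ = (λ_1,…,λ_n) ∈ Γ_{n−1}^+, then λ_i + λ_j > 0 for all pairs of distinct indices i ≠ j; that is, Γ_{n−1}^+ ⊆ V_{n−1}^+ = {(λ_1,…,λ_n) ∈ ℝ^n : λ_i + λ_j > 0 for all i ≠ j}. -/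
/-!
The cone `Γ_{n-1}^+` is connected, contains `(1, …, 1)`, which lies in the open set
`V = {λ | λ_i + λ_j > 0 for i ≠ j}`, and lies in `{σ_{n-1} > 0}`; so it suffices that
`σ_{n-1} ≤ 0` on the boundary of `V`. There all `λ_p + λ_q ≥ 0` and `λ_i + λ_j = 0` for some
`i ≠ j`, hence `λ_m ≥ 0` for `m ≠ i, j`. In `σ_{n-1} = ∑_k ∏_{m ≠ k} λ_m` the terms `k = i, j`
add up to `(λ_i + λ_j) ∏_{m ≠ i, j} λ_m = 0`, and every other term is
`λ_i λ_j = -λ_i²` times a product of nonnegative numbers.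
-/

lemma Finset.prod_compl_eq_mul_prod_compl_insert {ι M : Type*} [Fintype ι] [DecidableEq ι]
    [CommMonoid M] (f : ι → M) {s : Finset ι} {a : ι} (ha : a ∉ s) :
    ∏ m ∈ sᶜ, f m = f a * ∏ m ∈ (insert a s)ᶜ, f m := by
  rw [Finset.compl_insert, Finset.mul_prod_erase _ _ (Finset.mem_compl.2 ha)]

lemma sigmaElem_sub_one_eq_sum_prod_compl_singleton {n : ℕ} (hn : 1 ≤ n) (x : Fin n → ℝ) :
    sigmaElem n (n - 1) x = ∑ k, ∏ m ∈ ({k}ᶜ : Finset (Fin n)), x m := by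
  have himage : Finset.univ.powersetCard (n - 1)
      = Finset.univ.image fun k : Fin n => ({k}ᶜ : Finset (Fin n)) := by
    ext s
    simp only [Finset.mem_powersetCard, Finset.subset_univ, true_and, Finset.mem_image,
      Finset.mem_univ]
    constructor
    · intro hs
      obtain ⟨k, hk⟩ : ∃ k, sᶜ = {k} := Finset.card_eq_one.mp <| by
        rw [Finset.card_compl, hs, Fintype.card_fin]
        omega
      exact ⟨k, by rw [← hk, compl_compl]⟩
    · rintro ⟨k, rfl⟩
      rw [Finset.card_compl, Finset.card_singleton, Fintype.card_fin]
  rw [sigmaElem, himage, Finset.sum_image fun a _ b _ hab =>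
    Finset.singleton_injective (compl_injective hab)]

lemma sigmaElem_sub_one_nonpos {n : ℕ} {x : Fin n → ℝ} {i j : Fin n} (hij : i ≠ j)
    (hsum : x i + x j = 0) (hpair : ∀ p q : Fin n, p ≠ q → 0 ≤ x p + x q) :
    sigmaElem n (n - 1) x ≤ 0 := by
  have hrest : ∀ m ∉ ({i, j} : Finset (Fin n)), 0 ≤ x m := by
    intro m hm
    simp only [Finset.mem_insert, Finset.mem_singleton, not_or] at hm
    linarith [hpair m i hm.1, hpair m j hm.2]
  have hcancel :
      ∏ m ∈ ({i}ᶜ : Finset (Fin n)), x m + ∏ m ∈ ({j}ᶜ : Finset (Fin n)), x m = 0 := by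
    rw [Finset.prod_compl_eq_mul_prod_compl_insert x (s := {i}) (a := j)
        (by simpa using hij.symm),
      Finset.prod_compl_eq_mul_prod_compl_insert x (s := {j}) (a := i) (by simpa using hij),
      Finset.pair_comm]
    linear_combination (∏ m ∈ ({i, j} : Finset (Fin n))ᶜ, x m) * hsum
  have hother : ∀ k ∈ ({i, j} : Finset (Fin n))ᶜ, ∏ m ∈ ({k}ᶜ : Finset (Fin n)), x m ≤ 0 := by
    intro k hk
    simp only [Finset.mem_compl, Finset.mem_insert, Finset.mem_singleton, not_or] at hk
    rw [Finset.prod_compl_eq_mul_prod_compl_insert x (s := {k}) (a := i)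
        (by simpa using Ne.symm hk.1),
      Finset.prod_compl_eq_mul_prod_compl_insert x (s := {i, k}) (a := j)
        (by simpa using ⟨hij.symm, Ne.symm hk.2⟩), ← mul_assoc]
    have hprod : x i * x j = -x i ^ 2 := by linear_combination x i * hsum
    refine mul_nonpos_of_nonpos_of_nonneg (by rw [hprod]; exact neg_nonpos.2 (sq_nonneg _)) ?_
    refine Finset.prod_nonneg fun m hm => hrest m ?_
    simp only [Finset.mem_compl, Finset.mem_insert, Finset.mem_singleton, not_or] at hm ⊢
    exact ⟨hm.2.1, hm.1⟩
  rw [sigmaElem_sub_one_eq_sum_prod_compl_singleton i.pos x, ← Finset.sum_add_sum_compl {i, j},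
    Finset.sum_pair hij, hcancel, zero_add]
  exact Finset.sum_nonpos hother

def pairwiseSumPos (n : ℕ) : Set (Fin n → ℝ) := {x | ∀ i j : Fin n, i ≠ j → 0 < x i + x j}

lemma isOpen_pairwiseSumPos (n : ℕ) : IsOpen (pairwiseSumPos n) := by
  simp only [pairwiseSumPos, Set.ofPred_forall]
  exact isOpen_iInter_of_finite fun i => isOpen_iInter_of_finite fun j =>
    isOpen_iInter_of_finite fun _ => isOpen_lt continuous_const (by fun_prop)

lemma mem_pairwiseSumPos_of_mem_closure {n : ℕ} {x : Fin n → ℝ}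
    (hx : x ∈ closure (pairwiseSumPos n)) (hσ : 0 < sigmaElem n (n - 1) x) :
    x ∈ pairwiseSumPos n := by
  have hpair : ∀ i j : Fin n, i ≠ j → 0 ≤ x i + x j := fun i j hij => by
    simpa [closure_Ioi] using map_mem_closure (f := fun y : Fin n → ℝ => y i + y j)
      (t := Set.Ioi 0) (by fun_prop) hx fun y hy => hy i j hij
  intro i j hij
  refine (hpair i j hij).lt_of_ne' fun hsum => ?_
  exact hσ.not_ge (sigmaElem_sub_one_nonpos hij hsum hpair)

theorem gammaPlus_subset_V_general (n : ℕ) (Λ : Fin n → ℝ)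
    (h : Λ ∈ GammaPlus n (n - 1)) :
    ∀ i j : Fin n, i ≠ j → 0 < Λ i + Λ j := by
  have hone : (fun _ => 1) ∈ {x | 0 < sigmaElem n (n - 1) x} :=
    connectedComponentIn_nonempty_iff.mp ⟨Λ, h⟩
  refine isPreconnected_connectedComponentIn.subset_of_closure_inter_subset
    (isOpen_pairwiseSumPos n) ⟨_, mem_connectedComponentIn hone, fun _ _ _ => by norm_num⟩ ?_ h
  rintro x ⟨hx, hxΓ⟩
  have hσ : x ∈ {x | 0 < sigmaElem n (n - 1) x} := connectedComponentIn_subset _ _ hxΓ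
  exact mem_pairwiseSumPos_of_mem_closure hx hσ

/-- `Γ_{n-1}^+ ⊆ V_{n-1}^+`, i.e. `λ_i + λ_j > 0` for `i ≠ j`. -/
theorem gammaPlus_subset_V (n : ℕ) (hn : 2 ≤ n) (Λ : Fin n → ℝ)
    (h : Λ ∈ GammaPlus n (n - 1)) :
    ∀ i j : Fin n, i ≠ j → 0 < Λ i + Λ j :=
  gammaPlus_subset_V_general n Λ h
end

section
/- Let n ≥ 2 and let A = (a_1,…,a_n) ∈ ℝ^n be a nonzero vector belonging to the closed Gårding cone Γ̄_2^+. Then σ_1(A) = a_1 + ⋯ + a_n > 0. -/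
lemma sigmaElem_two_eq (n : ℕ) (x : Fin n → ℝ) :
    sigmaElem n 2 x =
      ∑ p ∈ (Finset.univ.offDiag.filter (fun p : Fin n × Fin n => p.1 < p.2)),
        x p.1 * x p.2 := by
  unfold sigmaElem
  refine (Finset.sum_bij (fun p _ => ({p.1, p.2} : Finset (Fin n))) ?_ ?_ ?_ ?_).symm
  · rintro ⟨a, b⟩ hp
    simp only [Finset.mem_filter, Finset.mem_offDiag] at hp
    simp [Finset.mem_powersetCard, Finset.card_pair (ne_of_lt hp.2)]
  · rintro ⟨a, b⟩ ha ⟨c, d⟩ hc h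
    simp only [Finset.mem_filter, Finset.mem_offDiag] at ha hc
    have hab : a < b := ha.2
    have hcd : c < d := hc.2
    have h' : ({a, b} : Finset (Fin n)) = {c, d} := h
    have h1 : a ∈ ({c, d} : Finset (Fin n)) := by rw [← h']; simp
    have h2 : b ∈ ({c, d} : Finset (Fin n)) := by rw [← h']; simp
    have h3 : c ∈ ({a, b} : Finset (Fin n)) := by rw [h']; simp
    have h4 : d ∈ ({a, b} : Finset (Fin n)) := by rw [h']; simp
    simp only [Finset.mem_insert, Finset.mem_singleton] at h1 h2 h3 h4
    ext <;> simp only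
    · rcases h1 with rfl | rfl
      · rfl
      · rcases h3 with rfl | rfl
        · rfl
        · exact absurd hcd (lt_asymm hab)
    · rcases h2 with rfl | rfl
      · rcases h4 with rfl | rfl
        · exact absurd hcd (lt_asymm hab)
        · rfl
      · rfl
  · intro s hs
    rw [Finset.mem_powersetCard] at hs
    obtain ⟨a, b, hab, rfl⟩ := Finset.card_eq_two.mp hs.2
    rcases hab.lt_or_gt with h | h
    · exact ⟨(a, b), by simp [Finset.mem_offDiag, hab, h], rfl⟩
    · exact ⟨(b, a), by simp [Finset.mem_offDiag, hab.symm, h],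
        by rw [Finset.pair_comm]⟩
  · rintro ⟨a, b⟩ hp
    simp only [Finset.mem_filter, Finset.mem_offDiag] at hp
    rw [Finset.prod_pair (ne_of_lt hp.2)]

lemma sq_sum_eq (n : ℕ) (x : Fin n → ℝ) :
    (∑ i, x i) ^ 2 = (∑ i, (x i) ^ 2) + 2 * sigmaElem n 2 x := by
  rw [sigmaElem_two_eq]
  rw [sq, Finset.sum_mul_sum]
  rw [← Finset.sum_product', ← Finset.diag_union_offDiag,
    Finset.sum_union (Finset.disjoint_diag_offDiag _), Finset.sum_diag]
  congr 1
  · exact Finset.sum_congr rfl (fun i _ => (sq (x i)).symm)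
  · rw [← Finset.sum_filter_add_sum_filter_not Finset.univ.offDiag
      (fun p : Fin n × Fin n => p.1 < p.2)]
    have hswap : ∑ p ∈ (Finset.univ.offDiag.filter
        (fun p : Fin n × Fin n => ¬ p.1 < p.2)), x p.1 * x p.2 =
        ∑ p ∈ (Finset.univ.offDiag.filter
        (fun p : Fin n × Fin n => p.1 < p.2)), x p.1 * x p.2 := by
      refine Finset.sum_nbij' (fun p => Prod.swap p) (fun p => Prod.swap p)
        ?_ ?_ ?_ ?_ ?_
      · rintro ⟨a, b⟩ hp
        simp only [Finset.mem_filter, Finset.mem_offDiag, not_lt] at hp ⊢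
        exact ⟨⟨hp.1.2.1, hp.1.1, hp.1.2.2.symm⟩,
          lt_of_le_of_ne hp.2 hp.1.2.2.symm⟩
      · rintro ⟨a, b⟩ hp
        simp only [Finset.mem_filter, Finset.mem_offDiag, not_lt] at hp ⊢
        exact ⟨⟨hp.1.2.1, hp.1.1, hp.1.2.2.symm⟩, le_of_lt hp.2⟩
      · intro p _; rfl
      · intro p _; rfl
      · rintro ⟨a, b⟩ _; exact mul_comm _ _
    rw [hswap]; ring

lemma sigma1_nonneg_on_gamma (n : ℕ) (hn : 2 ≤ n) (x : Fin n → ℝ)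
    (hx : x ∈ GammaPlus n 2) : 0 < ∑ i, x i := by
  -- the image of the connected Gårding cone under σ₁ avoids 0 and contains n
  have hone : (fun _ => (1 : ℝ)) ∈ {y : Fin n → ℝ | 0 < sigmaElem n 2 y} := by
    have : sigmaElem n 2 (fun _ => (1 : ℝ)) = (n.choose 2 : ℝ) := by
      unfold sigmaElem
      simp [Finset.card_powersetCard]
    simp only [Set.mem_setOf_eq, this]
    have : 0 < n.choose 2 := Nat.choose_pos hn
    exact_mod_cast this
  have hconn : IsConnected (GammaPlus n 2) :=
    isConnected_connectedComponentIn_iff.mpr hone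
  have hcont : Continuous (fun y : Fin n → ℝ => ∑ i, y i) := by
    exact continuous_finset_sum _ (fun i _ => continuous_apply i)
  have himg : IsConnected ((fun y : Fin n → ℝ => ∑ i, y i) '' GammaPlus n 2) :=
    hconn.image _ hcont.continuousOn
  have havoid : (0 : ℝ) ∉ (fun y : Fin n → ℝ => ∑ i, y i) '' GammaPlus n 2 := by
    rintro ⟨y, hy, hy0⟩
    have hy2 : 0 < sigmaElem n 2 y :=
      connectedComponentIn_subset {z : Fin n → ℝ | 0 < sigmaElem n 2 z} _ hy
    have := sq_sum_eq n y
    simp only at hy0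
    rw [hy0] at this
    have hsum : ∑ i, (y i) ^ 2 = -(2 * sigmaElem n 2 y) := by linarith
    have hnonneg : (0:ℝ) ≤ ∑ i, (y i) ^ 2 :=
      Finset.sum_nonneg (fun i _ => sq_nonneg _)
    linarith
  have hmem : (n : ℝ) ∈ (fun y : Fin n → ℝ => ∑ i, y i) '' GammaPlus n 2 := by
    refine ⟨fun _ => 1, mem_connectedComponentIn hone, by simp⟩
  have hx' : (∑ i, x i) ∈ (fun y : Fin n → ℝ => ∑ i, y i) '' GammaPlus n 2 :=
    ⟨x, hx, rfl⟩
  by_contra hle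
  push_neg at hle
  have hlt : (∑ i, x i) < 0 := lt_of_le_of_ne hle (fun h => havoid (h ▸ hx'))
  have hord : Set.OrdConnected ((fun y : Fin n → ℝ => ∑ i, y i) '' GammaPlus n 2) :=
    himg.isPreconnected.ordConnected
  have h0 : (0 : ℝ) ∈ Set.Icc (∑ i, x i) (n : ℝ) :=
    ⟨le_of_lt hlt, by positivity⟩
  exact havoid (hord.out hx' hmem h0)

/-- a nonzero vector in `Γ̄_2^+` has positive `σ_1`. -/
theorem sigma1_pos_of_mem_closure_gamma2 (n : ℕ) (hn : 2 ≤ n)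
    (A : Fin n → ℝ) (hA0 : A ≠ 0) (hA : A ∈ closure (GammaPlus n 2)) :
    0 < ∑ i, A i := by
  have hcont1 : Continuous (fun y : Fin n → ℝ => ∑ i, y i) :=
    continuous_finset_sum _ (fun i _ => continuous_apply i)
  have hcont2 : Continuous (sigmaElem n 2) := by
    unfold sigmaElem
    exact continuous_finset_sum _ (fun s _ =>
      continuous_finset_prod _ (fun i _ => continuous_apply i))
  -- σ₁(A) ≥ 0 on the closure
  have h1 : 0 ≤ ∑ i, A i := by
    have : closure (GammaPlus n 2) ⊆ {y : Fin n → ℝ | 0 ≤ ∑ i, y i} := by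
      apply closure_minimal
      · intro y hy; exact le_of_lt (sigma1_nonneg_on_gamma n hn y hy)
      · exact isClosed_le continuous_const hcont1
    exact this hA
  -- σ₂(A) ≥ 0 on the closure
  have h2 : 0 ≤ sigmaElem n 2 A := by
    have : closure (GammaPlus n 2) ⊆ {y : Fin n → ℝ | 0 ≤ sigmaElem n 2 y} := by
      apply closure_minimal
      · intro y hy
        have h3 : y ∈ {z : Fin n → ℝ | 0 < sigmaElem n 2 z} :=
          connectedComponentIn_subset {z : Fin n → ℝ | 0 < sigmaElem n 2 z}
            (fun _ => (1:ℝ)) hy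
        simp only [Set.mem_setOf_eq] at h3 ⊢
        exact le_of_lt h3
      · exact isClosed_le continuous_const hcont2
    exact this hA
  rcases lt_or_eq_of_le h1 with h | h
  · exact h
  · exfalso
    have hid := sq_sum_eq n A
    rw [← h] at hid
    have hsq : ∑ i, (A i) ^ 2 ≤ 0 := by
      simpa using by nlinarith
    have hzero : ∀ i : Fin n, A i = 0 := by
      intro i
      have : ∀ j ∈ Finset.univ, (0:ℝ) ≤ (A j) ^ 2 := fun j _ => sq_nonneg _
      have h0 : ∑ i, (A i) ^ 2 = 0 :=
        le_antisymm hsq (Finset.sum_nonneg this)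
      have h2 := (Finset.sum_eq_zero_iff_of_nonneg this).mp h0 i (Finset.mem_univ i)
      nlinarith [sq_nonneg (A i), h2]
    exact hA0 (funext hzero)
end

section
/- Let n = 2k be even with k ≥ 2, and let Λ_0 = (1,1,…,1,0) ∈ ℝ^n, so that A_{Λ_0} = (1/2,…,1/2,−1/2). Then σ_k(A_{Λ_0}) = 0 and σ_j(A_{Λ_0}) > 0 for every 1 ≤ j ≤ k−1; consequently A_{Λ_0} ∈ Γ_{k−1}^+ and A_{Λ_0} ∈ Γ̄_k^+. -/
/-- `A_Λ = Λ − (Σ_i λ_i / (2(n−1))) · (1,…,1)`. -/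
noncomputable def ALam (n : ℕ) (Λ : Fin n → ℝ) : Fin n → ℝ :=
  fun i => Λ i - (∑ j, Λ j) / (2 * ((n : ℝ) - 1))

open Finset AffineMap

section Topology

variable {E : Type*} [TopologicalSpace E] [AddCommGroup E] [Module ℝ E]
  [IsTopologicalAddGroup E] [ContinuousSMul ℝ E] {S : Set E} {x y : E}

theorem mem_connectedComponentIn_of_lineMap_mem
    (h : ∀ t ∈ Set.Icc (0 : ℝ) 1, lineMap x y t ∈ S) :
    y ∈ connectedComponentIn S x := by
  have hsub :=
    (isPreconnected_Icc.image _ lineMap_continuous.continuousOn).subset_connectedComponentIn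
      ⟨0, Set.left_mem_Icc.2 zero_le_one, lineMap_apply_zero x y⟩ (Set.image_subset_iff.2 h)
  exact hsub ⟨1, Set.right_mem_Icc.2 zero_le_one, lineMap_apply_one x y⟩

theorem mem_closure_connectedComponentIn_of_lineMap_mem
    (h : ∀ t ∈ Set.Ico (0 : ℝ) 1, lineMap x y t ∈ S) :
    y ∈ closure (connectedComponentIn S x) := by
  have hsub :=
    (isPreconnected_Ico.image _ lineMap_continuous.continuousOn).subset_connectedComponentIn
      ⟨0, Set.left_mem_Ico.2 zero_lt_one, lineMap_apply_zero x y⟩ (Set.image_subset_iff.2 h)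
  have hy : lineMap x y (1 : ℝ) ∈ closure (lineMap x y '' Set.Ico (0 : ℝ) 1) :=
    lineMap_continuous.continuousWithinAt.mem_closure_image (by simp)
  exact closure_mono hsub (by simpa using hy)

end Topology

theorem Finset.sum_powersetCard_succ_insert {α β : Type*} [DecidableEq α] [AddCommMonoid β]
    {x : α} {s : Finset α} (hx : x ∉ s) (j : ℕ) (f : Finset α → β) :
    ∑ t ∈ (insert x s).powersetCard (j + 1), f t =
      ∑ t ∈ s.powersetCard (j + 1), f t + ∑ t ∈ s.powersetCard j, f (insert x t) := by
  rw [powersetCard_succ_insert hx, sum_union, sum_image]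
  · intro t ht u hu htu
    rw [mem_coe, mem_powersetCard] at ht hu
    rw [← erase_insert (fun h => hx (ht.1 h)), htu, erase_insert (fun h => hx (hu.1 h))]
  · rw [disjoint_left]
    intro t ht hmem
    obtain ⟨u, -, rfl⟩ := mem_image.1 hmem
    exact hx ((mem_powersetCard.1 ht).1 (mem_insert_self x u))

theorem Nat.choose_le_choose_succ {m j : ℕ} (h : 2 * j + 1 ≤ m) :
    m.choose j ≤ m.choose (j + 1) := by
  have key := Nat.choose_succ_right_eq m j
  refine Nat.le_of_mul_le_mul_right (c := j + 1) ?_ (by omega)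
  rw [key]
  exact Nat.mul_le_mul_left _ (by omega)

theorem Nat.choose_lt_choose_succ {m j : ℕ} (h : 2 * j + 1 < m) :
    m.choose j < m.choose (j + 1) := by
  have key := Nat.choose_succ_right_eq m j
  refine Nat.lt_of_mul_lt_mul_right (a := j + 1) ?_
  rw [key]
  exact Nat.mul_lt_mul_of_pos_left (by omega) (Nat.choose_pos (by omega))

def constWithLast (n : ℕ) (a b : ℝ) : Fin n → ℝ :=
  fun i => if (i : ℕ) = n - 1 then b else a

section ConstWithLast

variable {n : ℕ} {a b : ℝ}

theorem constWithLast_same (n : ℕ) (a : ℝ) : constWithLast n a a = fun _ => a := by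
  funext i
  exact ite_self a

theorem lineMap_constWithLast (a b a' b' t : ℝ) :
    lineMap (constWithLast n a b) (constWithLast n a' b') t =
      constWithLast n (lineMap a a' t) (lineMap b b' t) := by
  funext i
  simp only [lineMap_apply_module, Pi.add_apply, Pi.smul_apply, constWithLast]
  split_ifs <;> rfl

theorem exists_constWithLast_eq_ite (hn : 1 ≤ n) :
    ∃ i₀ : Fin n, ∀ i, constWithLast n a b i = if i = i₀ then b else a :=
  ⟨⟨n - 1, by omega⟩, fun i => by simp [constWithLast, Fin.ext_iff]⟩

theorem sum_constWithLast (hn : 1 ≤ n) : ∑ i, constWithLast n a b i = (n - 1) * a + b := by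
  obtain ⟨i₀, hi₀⟩ := exists_constWithLast_eq_ite (a := a) (b := b) hn
  rw [← add_sum_erase _ _ (mem_univ i₀)]
  simp only [hi₀, if_true]
  rw [sum_congr rfl fun i hi => if_neg (ne_of_mem_erase hi), sum_const,
    card_erase_of_mem (mem_univ _), card_univ, Fintype.card_fin, nsmul_eq_mul, Nat.cast_sub hn]
  push_cast; ring

theorem ALam_constWithLast_one_zero (hn : 2 ≤ n) :
    ALam n (constWithLast n 1 0) = constWithLast n (1 / 2) (-(1 / 2)) := by
  have hn' : (n : ℝ) - 1 ≠ 0 := by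
    have : (2 : ℝ) ≤ n := by exact_mod_cast hn
    linarith
  have hmean : (∑ i, constWithLast n 1 0 i) / (2 * ((n : ℝ) - 1)) = 1 / 2 := by
    rw [sum_constWithLast (by omega), div_eq_iff (by simpa using hn')]
    ring
  funext i
  simp only [ALam]
  rw [hmean]
  simp only [constWithLast]
  split_ifs <;> norm_num

theorem sigmaElem_constWithLast (hn : 1 ≤ n) (j : ℕ) :
    sigmaElem n (j + 1) (constWithLast n a b) =
      (n - 1).choose (j + 1) * a ^ (j + 1) + (n - 1).choose j * a ^ j * b := by
  classical
  obtain ⟨i₀, hi₀⟩ := exists_constWithLast_eq_ite (a := a) (b := b) hn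
  have hcard : #(univ.erase i₀) = n - 1 := by
    rw [card_erase_of_mem (mem_univ _), card_univ, Fintype.card_fin]
  have hprod : ∀ t ⊆ univ.erase i₀, ∏ i ∈ t, constWithLast n a b i = a ^ #t := fun t ht => by
    rw [prod_congr rfl fun i hi => (hi₀ i).trans (if_neg (ne_of_mem_erase (ht hi))),
      prod_const]
  rw [sigmaElem, ← insert_erase (mem_univ i₀), sum_powersetCard_succ_insert (notMem_erase i₀ _)]
  have hsub : ∀ {m} {t : Finset (Fin n)},
      t ∈ (univ.erase i₀).powersetCard m → t ⊆ univ.erase i₀ :=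
    fun ht => (mem_powersetCard.1 ht).1
  rw [sum_congr rfl fun t ht => hprod t (hsub ht),
    sum_congr rfl fun t ht => (prod_insert fun h => notMem_erase i₀ _ (hsub ht h)).trans
      (by rw [hi₀, if_pos rfl, hprod t (hsub ht)]),
    sum_powersetCard, sum_powersetCard (f := fun m => b * a ^ m), hcard, nsmul_eq_mul,
    nsmul_eq_mul]
  ring

theorem sigmaElem_constWithLast_eq_mul (hn : 1 ≤ n) (j : ℕ) :
    sigmaElem n (j + 1) (constWithLast n a b) =
      a ^ j * ((n - 1).choose j * (a + b) +
        (((n - 1).choose (j + 1) : ℝ) - (n - 1).choose j) * a) := by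
  rw [sigmaElem_constWithLast hn]
  ring

theorem sigmaElem_constWithLast_pos_of_lt {j : ℕ} (ha : 0 < a) (hab : 0 ≤ a + b)
    (hj : 2 * (j + 1) < n) : 0 < sigmaElem n (j + 1) (constWithLast n a b) := by
  have hC : ((n - 1).choose j : ℝ) < (n - 1).choose (j + 1) := by
    exact_mod_cast Nat.choose_lt_choose_succ (by omega)
  rw [sigmaElem_constWithLast_eq_mul (by omega)]
  exact mul_pos (pow_pos ha j) (add_pos_of_nonneg_of_pos (by positivity)
    (mul_pos (sub_pos.2 hC) ha))

theorem sigmaElem_constWithLast_pos_of_le {j : ℕ} (ha : 0 < a) (hab : 0 < a + b)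
    (hj : 2 * (j + 1) ≤ n) : 0 < sigmaElem n (j + 1) (constWithLast n a b) := by
  have hC : ((n - 1).choose j : ℝ) ≤ (n - 1).choose (j + 1) := by
    exact_mod_cast Nat.choose_le_choose_succ (by omega)
  have hC₀ : (0 : ℝ) < (n - 1).choose j := by exact_mod_cast Nat.choose_pos (by omega)
  rw [sigmaElem_constWithLast_eq_mul (by omega)]
  exact mul_pos (pow_pos ha j) (add_pos_of_pos_of_nonneg (mul_pos hC₀ hab)
    (mul_nonneg (sub_nonneg.2 hC) ha.le))

theorem sigmaElem_constWithLast_neg_eq_zero (j : ℕ) (a : ℝ) :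
    sigmaElem (2 * (j + 1)) (j + 1) (constWithLast (2 * (j + 1)) a (-a)) = 0 := by
  have hC : (2 * (j + 1) - 1).choose (j + 1) = (2 * (j + 1) - 1).choose j := by
    rw [← Nat.choose_symm (by omega)]
    congr 1
    omega
  rw [sigmaElem_constWithLast_eq_mul (by omega), hC]
  ring

theorem constWithLast_mem_gammaPlus {j : ℕ} (ha : 0 < a) (hab : 0 ≤ a + b)
    (hj : 2 * (j + 1) < n) : constWithLast n a b ∈ GammaPlus n (j + 1) := by
  refine mem_connectedComponentIn_of_lineMap_mem fun t ⟨ht₀, ht₁⟩ => ?_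
  rw [← constWithLast_same n 1, lineMap_constWithLast]
  refine sigmaElem_constWithLast_pos_of_lt ?_ ?_ hj <;> simp only [lineMap_apply_ring'] <;>
    nlinarith [mul_nonneg ht₀ ha.le, mul_nonneg (sub_nonneg.2 ht₁) ha.le, mul_nonneg ht₀ hab]

theorem constWithLast_mem_closure_gammaPlus {j : ℕ} (ha : 0 < a) (hab : 0 ≤ a + b)
    (hj : 2 * (j + 1) ≤ n) : constWithLast n a b ∈ closure (GammaPlus n (j + 1)) := by
  refine mem_closure_connectedComponentIn_of_lineMap_mem fun t ⟨ht₀, ht₁⟩ => ?_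
  rw [← constWithLast_same n 1, lineMap_constWithLast]
  refine sigmaElem_constWithLast_pos_of_le ?_ ?_ hj <;> simp only [lineMap_apply_ring'] <;>
    nlinarith [mul_nonneg ht₀ ha.le, mul_nonneg (sub_nonneg.2 ht₁.le) ha.le, mul_nonneg ht₀ hab]

end ConstWithLast

/-- for `n = 2k`, `k ≥ 2`, `Λ_0 = (1,…,1,0)` gives
`A_{Λ_0} = (1/2,…,1/2,−1/2)`, `σ_k(A_{Λ_0}) = 0`, `σ_j(A_{Λ_0}) > 0` for
`1 ≤ j ≤ k−1`; hence `A_{Λ_0} ∈ Γ_{k−1}^+` and `A_{Λ_0} ∈ Γ̄_k^+`. -/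
theorem stmt11 (k : ℕ) (hk : 2 ≤ k)
    (Λ₀ : Fin (2 * k) → ℝ)
    (hΛ₀ : Λ₀ = fun i : Fin (2 * k) => if (i : ℕ) = 2 * k - 1 then 0 else 1) :
    ALam (2 * k) Λ₀ =
      (fun i : Fin (2 * k) => if (i : ℕ) = 2 * k - 1 then -(1 / 2 : ℝ) else 1 / 2) ∧
    sigmaElem (2 * k) k (ALam (2 * k) Λ₀) = 0 ∧
    (∀ j, 1 ≤ j → j ≤ k - 1 → 0 < sigmaElem (2 * k) j (ALam (2 * k) Λ₀)) ∧
    ALam (2 * k) Λ₀ ∈ GammaPlus (2 * k) (k - 1) ∧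
    ALam (2 * k) Λ₀ ∈ closure (GammaPlus (2 * k) k) := by
  have hA : ALam (2 * k) Λ₀ = constWithLast (2 * k) (1 / 2) (-(1 / 2)) :=
    hΛ₀ ▸ ALam_constWithLast_one_zero (by omega)
  obtain ⟨p, rfl⟩ : ∃ p, k = p + 2 := ⟨k - 2, by omega⟩
  rw [hA]
  refine ⟨rfl, sigmaElem_constWithLast_neg_eq_zero (p + 1) _, fun j hj₁ hj₂ => ?_,
    constWithLast_mem_gammaPlus (j := p) (by norm_num) (by norm_num) (by omega),
    constWithLast_mem_closure_gammaPlus (j := p + 1) (by norm_num) (by norm_num) le_rfl⟩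
  obtain ⟨i, rfl⟩ : ∃ i, j = i + 1 := ⟨j - 1, by omega⟩
  exact sigmaElem_constWithLast_pos_of_lt (by norm_num) (by norm_num) (by omega)
end
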